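/- arXiv:2603.21506 — 4 statements merged into one kernel-verified Lean document; each statement's English description precedes it below -/
import Mathlib

section
/- Let R_0 be an order in an étale Q-algebra and let f ≥ 1 be an integer. The map sending an overorder R ⊇ R_0 with [R : R_0] = f to the R_0-submodule I := fR establishes a bijection between {overorders R of R_0 of index f} and {R_0-submodules I with fR_0 ⊆ I ⊆ R_0, I² ⊆ fI, and [I : fR_0] = f}; the inverse sends I to R = {x ∈ (1/f)R_0 : fx ∈ I}. -/
/-!
Multiplication by `f` is an additive automorphism of `E`, since `f` is invertible in a
`ℚ`-algebra; it preserves relative indices and turns a subring `R` into `fR`. If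
`[R : R₀] = f` then `f` kills `R / R₀`, so `fR ⊆ R₀`; conversely, `I² ⊆ fI` is exactly what
makes the rescaled group `f⁻¹I` closed under multiplication, and `fR₀ ⊆ I` puts `1` in it.
-/

variable {E : Type*} [CommRing E]

theorem IsUnit.mulLeft_injective {a : E} (ha : IsUnit a) :
    Function.Injective (AddMonoidHom.mulLeft a) :=
  ha.mul_right_injective

theorem IsUnit.mulLeft_surjective {a : E} (ha : IsUnit a) :
    Function.Surjective (AddMonoidHom.mulLeft a) := fun y =>
  ⟨↑ha.unit⁻¹ * y, by simp [← mul_assoc]⟩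

namespace Subring

def comapMulLeft {a : E} (ha : IsUnit a) (I : AddSubgroup E) (h_one : a ∈ I)
    (h_mul : ∀ x ∈ I, ∀ y ∈ I, x * y ∈ I.map (AddMonoidHom.mulLeft a)) : Subring E :=
  { I.comap (AddMonoidHom.mulLeft a) with
    one_mem' := by simpa using h_one
    mul_mem' := by
      intro x y hx hy
      obtain ⟨z, hz, hzxy⟩ := h_mul _ hx _ hy
      have hz_eq : z = a * (x * y) := ha.mul_right_injective <| by
        simp only [AddMonoidHom.coe_mulLeft] at hzxy ⊢
        rw [hzxy]
        ring
      show a * (x * y) ∈ I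
      exact hz_eq ▸ hz }

theorem toAddSubgroup_comapMulLeft {a : E} (ha : IsUnit a) (I : AddSubgroup E) (h_one h_mul) :
    (comapMulLeft ha I h_one h_mul).toAddSubgroup = I.comap (AddMonoidHom.mulLeft a) :=
  rfl

def IsOverorderOfIndex (R₀ : Subring E) (f : ℕ) (R : Subring E) : Prop :=
  R₀ ≤ R ∧ R₀.toAddSubgroup.relIndex R.toAddSubgroup = f

def IsScaledOverorder (R₀ : Subring E) (f : ℕ) (I : AddSubgroup E) : Prop :=
  (∀ r ∈ R₀, ∀ x ∈ I, r * x ∈ I) ∧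
    R₀.toAddSubgroup.map (AddMonoidHom.mulLeft (f : E)) ≤ I ∧
    I ≤ R₀.toAddSubgroup ∧
    (∀ x ∈ I, ∀ y ∈ I, x * y ∈ I.map (AddMonoidHom.mulLeft (f : E))) ∧
    (R₀.toAddSubgroup.map (AddMonoidHom.mulLeft (f : E))).relIndex I = f

variable {R₀ R : Subring E} {f : ℕ} {I : AddSubgroup E}

theorem IsOverorderOfIndex.natCast_mul_mem (hR : IsOverorderOfIndex R₀ f R) {x : E}
    (hx : x ∈ R) : (f : E) * x ∈ R₀ := by
  simpa [nsmul_eq_mul, hR.2] using R₀.toAddSubgroup.nsmul_relIndex_mem (K := R.toAddSubgroup) hx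

theorem IsOverorderOfIndex.isScaledOverorder_map (hf : IsUnit (f : E))
    (hR : IsOverorderOfIndex R₀ f R) :
    IsScaledOverorder R₀ f (R.toAddSubgroup.map (AddMonoidHom.mulLeft (f : E))) := by
  refine ⟨?_, AddSubgroup.map_mono hR.1, ?_, ?_, ?_⟩
  · rintro r hr _ ⟨y, hy, rfl⟩
    exact ⟨r * y, R.mul_mem (hR.1 hr) hy, by simp only [AddMonoidHom.coe_mulLeft]; ring⟩
  · rintro _ ⟨y, hy, rfl⟩
    exact hR.natCast_mul_mem hy
  · rintro _ ⟨x, hx, rfl⟩ _ ⟨y, hy, rfl⟩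
    exact ⟨f * (x * y), ⟨x * y, R.mul_mem hx hy, rfl⟩,
      by simp only [AddMonoidHom.coe_mulLeft]; ring⟩
  · rw [AddSubgroup.relIndex_map_map_of_injective _ _ hf.mulLeft_injective]
    exact hR.2

theorem IsScaledOverorder.natCast_mem (hI : IsScaledOverorder R₀ f I) : (f : E) ∈ I :=
  hI.2.1 ⟨1, R₀.one_mem, mul_one _⟩

theorem IsScaledOverorder.isOverorderOfIndex_comapMulLeft (hf : IsUnit (f : E))
    (hI : IsScaledOverorder R₀ f I) :
    IsOverorderOfIndex R₀ f (comapMulLeft hf I hI.natCast_mem hI.2.2.2.1) := by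
  refine ⟨fun r hr => hI.2.1 ⟨r, hr, rfl⟩, ?_⟩
  rw [← AddSubgroup.relIndex_map_map_of_injective _ _ hf.mulLeft_injective, toAddSubgroup_comapMulLeft,
    AddSubgroup.map_comap_eq_self_of_surjective hf.mulLeft_surjective]
  exact hI.2.2.2.2

def overorderEquivScaled (R₀ : Subring E) {f : ℕ} (hf : IsUnit (f : E)) :
    {R : Subring E // IsOverorderOfIndex R₀ f R} ≃ {I : AddSubgroup E // IsScaledOverorder R₀ f I}
    where
  toFun R := ⟨_, R.2.isScaledOverorder_map hf⟩
  invFun I := ⟨_, I.2.isOverorderOfIndex_comapMulLeft hf⟩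
  left_inv _ := Subtype.ext <| Subring.toAddSubgroup_injective <|
    AddSubgroup.comap_map_eq_self_of_injective hf.mulLeft_injective _
  right_inv _ := Subtype.ext <| AddSubgroup.map_comap_eq_self_of_surjective hf.mulLeft_surjective _

end Subring

theorem stmt2_general (E : Type) [CommRing E] [Algebra ℚ E]
    (R₀ : Subring E)
    (f : ℕ) (hf : 1 ≤ f) :
    ∃ e : {R : Subring E // R₀ ≤ R ∧ R₀.toAddSubgroup.relIndex R.toAddSubgroup = f} ≃
        {I : AddSubgroup E //
          (∀ r ∈ R₀, ∀ x ∈ I, r * x ∈ I) ∧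
          AddSubgroup.map (AddMonoidHom.mulLeft (f : E)) R₀.toAddSubgroup ≤ I ∧
          I ≤ R₀.toAddSubgroup ∧
          (∀ x ∈ I, ∀ y ∈ I, x * y ∈ AddSubgroup.map (AddMonoidHom.mulLeft (f : E)) I) ∧
          (AddSubgroup.map (AddMonoidHom.mulLeft (f : E)) R₀.toAddSubgroup).relIndex I = f},
      (∀ R, ((e R : AddSubgroup E)) =
          AddSubgroup.map (AddMonoidHom.mulLeft (f : E)) (R : Subring E).toAddSubgroup) ∧
      (∀ I, ∀ x : E, x ∈ (e.symm I : Subring E) ↔ (f : E) * x ∈ (I : AddSubgroup E)) := by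
  have hf_unit : IsUnit (f : E) := by
    simpa using (IsUnit.mk0 (f : ℚ) (by positivity)).map (algebraMap ℚ E)
  exact ⟨Subring.overorderEquivScaled R₀ hf_unit, fun _ => rfl, fun _ _ => Iff.rfl⟩

/-- Let `R₀` be an order in an étale `ℚ`-algebra `E` and `f ≥ 1`. The map `R ↦ I := f·R`
is a bijection between the overorders `R ⊇ R₀` of index `f` and the `R₀`-submodules `I`
with `fR₀ ⊆ I ⊆ R₀`, `I² ⊆ fI` and `[I : fR₀] = f`; the inverse sends `I` to
`R = {x ∈ (1/f)R₀ : fx ∈ I}`. -/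
theorem stmt2 (E : Type) [CommRing E] [Algebra ℚ E] [Module.Finite ℚ E]
    [Algebra.FormallyEtale ℚ E]
    (R₀ : Subring E) (hfull : Submodule.span ℚ (R₀ : Set E) = ⊤)
    (hfg : R₀.toAddSubgroup.FG)
    (f : ℕ) (hf : 1 ≤ f) :
    ∃ e : {R : Subring E // R₀ ≤ R ∧ R₀.toAddSubgroup.relIndex R.toAddSubgroup = f} ≃
        {I : AddSubgroup E //
          (∀ r ∈ R₀, ∀ x ∈ I, r * x ∈ I) ∧
          AddSubgroup.map (AddMonoidHom.mulLeft (f : E)) R₀.toAddSubgroup ≤ I ∧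
          I ≤ R₀.toAddSubgroup ∧
          (∀ x ∈ I, ∀ y ∈ I, x * y ∈ AddSubgroup.map (AddMonoidHom.mulLeft (f : E)) I) ∧
          (AddSubgroup.map (AddMonoidHom.mulLeft (f : E)) R₀.toAddSubgroup).relIndex I = f},
      (∀ R, ((e R : AddSubgroup E)) =
          AddSubgroup.map (AddMonoidHom.mulLeft (f : E)) (R : Subring E).toAddSubgroup) ∧
      (∀ I, ∀ x : E, x ∈ (e.symm I : Subring E) ↔ (f : E) * x ∈ (I : AddSubgroup E)) :=
  stmt2_general E R₀ f hf
end

section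
/- Let p be a prime, p ∤ 6, and q an integer with p ∤ q. Fix integers r ≥ 1 and β ≥ 0 with 3β < r. The number of solutions (u, a, b) with u ∈ (Z/p^{r-2β}Z)^× and (a, b) ∈ (Z/p^{2r}Z)² to the system {a + 3u ≡ 0 mod p^β, 3u² + 2au + b ≡ 0 mod p^{r-β}, u³ + au² + bu + q ≡ 0 mod p^{2r-3β}} equals (p-1)p^{2r-1} if β = 0, and n_p(q)·p^{2r+β} if β ≥ 1, where n_p(q) = #{r ∈ F_p : r³ ≡ -q mod p}. -/
/-!
For `p ∤ u`, subtracting `u` times the second congruence from the third shows that the system is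
equivalent to `u³ + q ≡ 0 (mod p^β)` together with the linear congruences
`u² a ≡ q - 2u³ (mod p^(r-β))` and `u b ≡ -(u³ + a u² + q) (mod p^(2r-3β))`, whose leading
coefficients are units. Modulo `p^(2r)` these have `p^(r+β)` and `p^(3β)` solutions, so it remains
to count the admissible `u < p^(r-2β)`. For `β = 0` these are the `φ(p^r)` units. For `β ≥ 1` the
condition only depends on `u mod p^β`, and since the derivative `3u²` of `X³ + q` is a unit at
every root, Hensel's lemma makes reduction a bijection from the cube roots of `-q` modulo `p^β`
onto those modulo `p`.
-/

open Finset Polynomial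

section Hensel

variable {A R S : Type*} [CommRing A] [CommRing R] [CommRing S] [Algebra A R] [Algebra A S]

theorem isUnit_of_isUnit_map_of_isNilpotent_ker (f : R →+* S) (hf : Function.Surjective f)
    (hker : ∀ x, f x = 0 → IsNilpotent x) {a : R} (ha : IsUnit (f a)) : IsUnit a := by
  obtain ⟨b, hb⟩ := hf ↑ha.unit⁻¹
  have hab : IsNilpotent (a * b - 1) := hker _ (by simp [hb])
  have hab' : IsUnit (a * b) := by simpa only [sub_add_cancel] using hab.isUnit_add_one
  exact isUnit_of_mul_isUnit_left hab'

theorem Polynomial.card_aeval_eq_zero_eq_of_isNilpotent_ker [IsReduced S] (P : A[X])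
    (f : R →ₐ[A] S) (hf : Function.Surjective f) (hker : ∀ x, f x = 0 → IsNilpotent x)
    (hP : ∀ y : S, aeval y P = 0 → IsUnit (aeval y (derivative P))) :
    Nat.card {x : R // aeval x P = 0} = Nat.card {y : S // aeval y P = 0} := by
  have hunit : ∀ x : R, aeval (f x) P = 0 → IsUnit (aeval x (derivative P)) := fun x hx =>
    isUnit_of_isUnit_map_of_isNilpotent_ker (f : R →+* S) hf hker
      (by simpa [aeval_algHom_apply] using hP _ hx)
  refine Nat.card_congr (Equiv.ofBijective
    (fun x => ⟨f x, by rw [aeval_algHom_apply, x.2, map_zero]⟩) ⟨?_, ?_⟩)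
  · rintro ⟨x₁, hx₁⟩ ⟨x₂, hx₂⟩ h
    have h₁₂ : f x₁ = f x₂ := congrArg Subtype.val h
    have hroot : aeval (f x₁) P = 0 := by rw [aeval_algHom_apply, hx₁, map_zero]
    exact Subtype.ext <| (existsUnique_nilpotent_sub_and_aeval_eq_zero (by simp [hx₁])
      (hunit x₁ hroot)).unique ⟨by simp, hx₁⟩ ⟨hker _ (by simp [h₁₂]), hx₂⟩
  · rintro ⟨y, hy⟩
    obtain ⟨x, rfl⟩ := hf y
    obtain ⟨r, ⟨hxr, hr⟩, -⟩ := existsUnique_nilpotent_sub_and_aeval_eq_zero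
      (hker _ (by rw [← aeval_algHom_apply, hy])) (hunit x hy)
    refine ⟨⟨r, hr⟩, Subtype.ext ?_⟩
    have hfxr := (hxr.map f).eq_zero
    rw [map_sub, sub_eq_zero] at hfxr
    exact hfxr.symm

end Hensel

theorem ZMod.isNilpotent_of_castHom_eq_zero {p k : ℕ} (hk : k ≠ 0) {x : ZMod (p ^ k)}
    (hx : ZMod.castHom (dvd_pow_self p hk) (ZMod p) x = 0) : IsNilpotent x := by
  have hval : (p : ℤ) ∣ ZMod.cast x := by
    rw [← ZMod.intCast_zmod_eq_zero_iff_dvd, ZMod.intCast_cast]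
    exact hx
  refine ⟨k, ?_⟩
  rw [← ZMod.intCast_zmod_cast x, ← Int.cast_pow, ZMod.intCast_zmod_eq_zero_iff_dvd]
  exact_mod_cast pow_dvd_pow_of_dvd hval k

theorem ZMod.card_pow_eq_intCast_prime_pow {p : ℕ} [Fact p.Prime] {n k : ℕ} (hk : k ≠ 0)
    (hn : ¬ p ∣ n) {c : ℤ} (hc : ¬ (p : ℤ) ∣ c) :
    Nat.card {x : ZMod (p ^ k) // x ^ n = c} = Nat.card {x : ZMod p // x ^ n = c} := by
  have hsimple : ∀ y : ZMod p, aeval y (X ^ n - C c : ℤ[X]) = 0 →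
      IsUnit (aeval y (derivative (X ^ n - C c : ℤ[X]))) := by
    intro y hy
    have hn0 : (n : ZMod p) ≠ 0 := by rwa [Ne, ZMod.natCast_eq_zero_iff]
    have hc0 : (c : ZMod p) ≠ 0 := by rwa [Ne, ZMod.intCast_zmod_eq_zero_iff_dvd]
    have hy0 : y ≠ 0 := by
      rintro rfl
      simp [zero_pow (fun h : n = 0 => hn (h ▸ dvd_zero p)), hc0] at hy
    simp [derivative_X_pow, hn0, hy0]
  simpa [sub_eq_zero] using Polynomial.card_aeval_eq_zero_eq_of_isNilpotent_ker
    (X ^ n - C c : ℤ[X]) (ZMod.castHom (dvd_pow_self p hk) (ZMod p)).toIntAlgHom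
    (ZMod.castHom_surjective (dvd_pow_self p hk))
    (fun _ => ZMod.isNilpotent_of_castHom_eq_zero hk) hsimple

theorem ZMod.card_castHom_fiber {m n : ℕ} [NeZero n] (h : m ∣ n) (y : ZMod m) :
    #{x : ZMod n | ZMod.castHom h (ZMod m) x = y} = n / m := by
  set f := ZMod.castHom h (ZMod m)
  have hm : m ≠ 0 := by rintro rfl; exact NeZero.ne n (Nat.eq_zero_of_zero_dvd h)
  have : NeZero m := ⟨hm⟩
  have hfiber : ∀ y, #{x | f x = y} = #{x | f x = 0} := fun y =>
    AddMonoidHom.card_fiber_eq_of_mem_range f (ZMod.castHom_surjective h y) ⟨0, map_zero f⟩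
  have hn : n = m * #{x | f x = 0} := by
    calc n = #(univ : Finset (ZMod n)) := (ZMod.card n).symm
      _ = ∑ y : ZMod m, #{x | f x = y} := card_eq_sum_card_fiberwise (by simp)
      _ = m * #{x | f x = 0} := by simp [hfiber]
  rw [hfiber y, Nat.eq_div_of_mul_eq_right hm hn.symm]

theorem card_filter_range_natCast {m n : ℕ} [NeZero n] (h : m ∣ n) (P : ZMod m → Prop)
    [DecidablePred P] : #{x ∈ range n | P ((x : ℕ) : ZMod m)} = Nat.card {y // P y} * (n / m) := by
  have : NeZero m := ⟨by rintro rfl; exact NeZero.ne n (Nat.eq_zero_of_zero_dvd h)⟩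
  set f := ZMod.castHom h (ZMod m)
  have hrange : #{x ∈ range n | P ((x : ℕ) : ZMod m)} = #{z : ZMod n | P (f z)} := by
    refine card_nbij' (fun x => (x : ZMod n)) ZMod.val ?_ ?_ ?_ ?_
    · intro x hx
      simp only [coe_filter, mem_range, Set.mem_ofPred_eq, mem_univ, true_and] at hx ⊢
      rw [map_natCast]
      exact hx.2
    · intro z hz
      simp only [coe_filter, mem_range, Set.mem_ofPred_eq, mem_univ, true_and] at hz ⊢
      rw [← map_natCast f, ZMod.natCast_zmod_val]
      exact ⟨ZMod.val_lt z, hz⟩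
    · intro x hx
      exact ZMod.val_cast_of_lt (mem_range.mp (mem_filter.mp hx).1)
    · intro z _
      exact ZMod.natCast_zmod_val z
  rw [hrange, Nat.card_eq_fintype_card, Fintype.card_subtype, ← smul_eq_mul, ← sum_const,
    card_eq_sum_card_fiberwise (f := f) (t := {y | P y}) (by intro z; simp)]
  refine sum_congr rfl fun y hy => ?_
  rw [← ZMod.card_castHom_fiber h y, filter_filter]
  refine congrArg card (filter_congr fun z _ => and_iff_right_of_imp fun hz => ?_)
  exact hz ▸ (mem_filter.mp hy).2

theorem card_filter_range_dvd_mul_add {m n : ℕ} [NeZero n] (h : m ∣ n) {w : ℤ}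
    (hw : IsCoprime w m) (c : ℤ) : #{x ∈ range n | (m : ℤ) ∣ w * ((x : ℕ) : ℤ) + c} = n / m := by
  obtain ⟨v, hv⟩ := (ZMod.coe_int_isUnit_iff_isCoprime w m).mpr hw.symm
  have hsol : ∀ y : ZMod m, (w : ZMod m) * y + c = 0 ↔ y = ↑v⁻¹ * -c := by
    intro y
    rw [Units.eq_inv_mul_iff_mul_eq, hv, eq_neg_iff_add_eq_zero]
  calc #{x ∈ range n | (m : ℤ) ∣ w * ((x : ℕ) : ℤ) + c}
      = #{x ∈ range n | (w : ZMod m) * ((x : ℕ) : ZMod m) + c = 0} := by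
        refine congrArg card (filter_congr fun x _ => ?_)
        rw [← ZMod.intCast_zmod_eq_zero_iff_dvd]
        push_cast
        rfl
    _ = n / m := by
        rw [card_filter_range_natCast h (fun y => (w : ZMod m) * y + c = 0),
          Nat.card_congr (Equiv.subtypeEquivRight hsol), Nat.card_unique, one_mul]

theorem card_filter_product_of_card_fiber {α β : Type*} {s : Finset α} {t : Finset β}
    (P : α → Prop) (Q : α → β → Prop) [DecidablePred P] [∀ a, DecidablePred (Q a)] {k : ℕ}
    (hk : ∀ a ∈ s, P a → #{b ∈ t | Q a b} = k) :
    #{x ∈ s ×ˢ t | P x.1 ∧ Q x.1 x.2} = #{a ∈ s | P a} * k := by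
  calc #{x ∈ s ×ˢ t | P x.1 ∧ Q x.1 x.2}
      = ∑ a ∈ s, if P a then #{b ∈ t | Q a b} else 0 := by
        rw [card_filter, sum_product]
        refine sum_congr rfl fun a _ => ?_
        split_ifs with ha
        · simp only [ha, true_and, card_filter]
        · simp [ha]
    _ = ∑ a ∈ s, if P a then k else 0 := sum_congr rfl fun a ha => by
        split_ifs with hPa
        exacts [hk a ha hPa, rfl]
    _ = #{a ∈ s | P a} * k := by rw [← sum_filter, sum_const, smul_eq_mul]

theorem triple_root_dvd_iff {m₁ m₂ m₃ u a b q : ℤ} (h₁₂ : m₁ ∣ m₂) (h₂₃ : m₂ ∣ m₃)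
    (hu : IsCoprime u m₂) :
    (m₁ ∣ a + 3 * u ∧ m₂ ∣ 3 * u ^ 2 + 2 * a * u + b ∧ m₃ ∣ u ^ 3 + a * u ^ 2 + b * u + q) ↔
      (m₁ ∣ u ^ 3 + q ∧ m₂ ∣ u ^ 2 * a + (2 * u ^ 3 - q)) ∧
        m₃ ∣ u * b + (u ^ 3 + a * u ^ 2 + q) := by
  have hu₁ : IsCoprime (u ^ 2) m₁ := (hu.of_isCoprime_of_dvd_right h₁₂).pow_left
  have e₁ : u ^ 2 * (a + 3 * u) = (u ^ 3 + q) + (u ^ 2 * a + (2 * u ^ 3 - q)) := by ring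
  have e₂ : u * (3 * u ^ 2 + 2 * a * u + b) =
      (u ^ 3 + a * u ^ 2 + b * u + q) + (u ^ 2 * a + (2 * u ^ 3 - q)) := by ring
  have e₃ : u * b + (u ^ 3 + a * u ^ 2 + q) = u ^ 3 + a * u ^ 2 + b * u + q := by ring
  rw [e₃]
  constructor
  · rintro ⟨h₁, h₂, h₃⟩
    have hD : m₂ ∣ u ^ 2 * a + (2 * u ^ 3 - q) :=
      (dvd_add_right (h₂₃.trans h₃)).mp (e₂ ▸ dvd_mul_of_dvd_right h₂ u)
    exact ⟨⟨(dvd_add_left (h₁₂.trans hD)).mp (e₁ ▸ dvd_mul_of_dvd_right h₁ _), hD⟩, h₃⟩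
  · rintro ⟨⟨hg, hD⟩, h₃⟩
    refine ⟨hu₁.symm.dvd_of_dvd_mul_left ?_, hu.symm.dvd_of_dvd_mul_left ?_, h₃⟩
    · exact e₁ ▸ dvd_add hg (h₁₂.trans hD)
    · exact e₂ ▸ dvd_add (h₂₃.trans h₃) hD

theorem card_filter_range_product_dvd_mul_add {m₁ m₂ n : ℕ} [NeZero n] (h₁ : m₁ ∣ n) (h₂ : m₂ ∣ n)
    {v w : ℤ} (hv : IsCoprime v m₁) (hw : IsCoprime w m₂) (c : ℤ) (g : ℕ → ℤ) :
    #{x ∈ range n ×ˢ range n | (m₁ : ℤ) ∣ v * x.1 + c ∧ (m₂ : ℤ) ∣ w * x.2 + g x.1} =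
      n / m₁ * (n / m₂) := by
  rw [card_filter_product_of_card_fiber (fun a : ℕ => (m₁ : ℤ) ∣ v * a + c)
      (fun a b : ℕ => (m₂ : ℤ) ∣ w * b + g a)
      fun a _ _ => card_filter_range_dvd_mul_add h₂ hw (g a),
    card_filter_range_dvd_mul_add h₁ hv c]

theorem card_filter_range_cube_root {p : ℕ} [Fact p.Prime] (hp3 : ¬ p ∣ 3) {q : ℤ}
    (hq : ¬ (p : ℤ) ∣ q) {β k : ℕ} (hβ : β ≠ 0) (hβk : β ≤ k) :
    #{u ∈ range (p ^ k) | ¬ p ∣ u ∧ (p : ℤ) ^ β ∣ (u : ℤ) ^ 3 + q} =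
      Nat.card {x : ZMod p // x ^ 3 = -(q : ZMod p)} * p ^ (k - β) := by
  have hp : p.Prime := Fact.out
  have hroot : ∀ u : ℕ, (p : ℤ) ^ β ∣ (u : ℤ) ^ 3 + q ↔
      ((u : ℕ) : ZMod (p ^ β)) ^ 3 = ((-q : ℤ) : ZMod (p ^ β)) := fun u => by
    rw [Int.cast_neg, eq_neg_iff_add_eq_zero, ← Nat.cast_pow p β,
      ← ZMod.intCast_zmod_eq_zero_iff_dvd]
    push_cast
    rfl
  have hunit : ∀ u : ℕ, (p : ℤ) ^ β ∣ (u : ℤ) ^ 3 + q → ¬ p ∣ u := fun u hu hpu => by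
    have hpu3 : (p : ℤ) ∣ (u : ℤ) ^ 3 := dvd_pow (Int.natCast_dvd_natCast.mpr hpu) three_ne_zero
    exact hq ((dvd_add_right hpu3).mp ((dvd_pow_self _ hβ).trans hu))
  calc #{u ∈ range (p ^ k) | ¬ p ∣ u ∧ (p : ℤ) ^ β ∣ (u : ℤ) ^ 3 + q}
      = #{u ∈ range (p ^ k) | ((u : ℕ) : ZMod (p ^ β)) ^ 3 = ((-q : ℤ) : ZMod (p ^ β))} :=
        congrArg card <| filter_congr fun u _ => by
          rw [and_iff_right_of_imp (hunit u), hroot]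
    _ = Nat.card {x : ZMod p // x ^ 3 = -(q : ZMod p)} * p ^ (k - β) := by
        rw [card_filter_range_natCast (pow_dvd_pow p hβk)
            (fun x => x ^ 3 = ((-q : ℤ) : ZMod (p ^ β))),
          ZMod.card_pow_eq_intCast_prime_pow hβ hp3 (by rwa [dvd_neg]), Int.cast_neg,
          Nat.pow_div hβk hp.pos]

theorem Nat.card_subtype_triple_lt {M N : ℕ} (P R : ℕ × ℕ × ℕ → Prop) [DecidablePred P]
    [DecidablePred R] :
    Nat.card {x : ℕ × ℕ × ℕ // x.1 < M ∧ P x ∧ x.2.1 < N ∧ x.2.2 < N ∧ R x} =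
      #{x ∈ range M ×ˢ (range N ×ˢ range N) | P x ∧ R x} := by
  rw [← Nat.card_eq_finsetCard]
  refine Nat.card_congr (Equiv.subtypeEquivRight fun x => ?_)
  simp only [mem_filter, mem_product, mem_range]
  tauto

theorem card_triple_root_solutions {p : ℕ} (hp : p.Prime) (q : ℤ) {i j k l : ℕ} (hij : i ≤ j)
    (hjk : j ≤ k) (hkl : k ≤ l) (M : ℕ) :
    Nat.card {x : ℕ × ℕ × ℕ //
        x.1 < M ∧ ¬ p ∣ x.1 ∧ x.2.1 < p ^ l ∧ x.2.2 < p ^ l ∧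
        (p : ℤ) ^ i ∣ ((x.2.1 : ℤ) + 3 * (x.1 : ℤ)) ∧
        (p : ℤ) ^ j ∣ (3 * (x.1 : ℤ) ^ 2 + 2 * (x.2.1 : ℤ) * (x.1 : ℤ) + (x.2.2 : ℤ)) ∧
        (p : ℤ) ^ k ∣ ((x.1 : ℤ) ^ 3 + (x.2.1 : ℤ) * (x.1 : ℤ) ^ 2 + (x.2.2 : ℤ) * (x.1 : ℤ) + q)} =
      #{u ∈ range M | ¬ p ∣ u ∧ (p : ℤ) ^ i ∣ (u : ℤ) ^ 3 + q} * (p ^ (l - j) * p ^ (l - k)) := by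
  have : NeZero (p ^ l) := ⟨pow_ne_zero l hp.ne_zero⟩
  have hcop : ∀ {u : ℕ} (e : ℕ), ¬ p ∣ u → IsCoprime (u : ℤ) ((p ^ e : ℕ) : ℤ) := fun e hu =>
    Nat.isCoprime_iff_coprime.mpr (Nat.Coprime.pow_right e ((hp.coprime_iff_not_dvd).mpr hu).symm)
  rw [Nat.card_subtype_triple_lt, ← Nat.pow_div (hjk.trans hkl) hp.pos, ← Nat.pow_div hkl hp.pos,
    ← card_filter_product_of_card_fiber (fun u : ℕ => ¬ p ∣ u ∧ (p : ℤ) ^ i ∣ (u : ℤ) ^ 3 + q)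
      (fun (u : ℕ) (x : ℕ × ℕ) => ((p ^ j : ℕ) : ℤ) ∣ (u : ℤ) ^ 2 * x.1 + (2 * (u : ℤ) ^ 3 - q) ∧
        ((p ^ k : ℕ) : ℤ) ∣ (u : ℤ) * x.2 + ((u : ℤ) ^ 3 + x.1 * (u : ℤ) ^ 2 + q))
      fun u _ hu => card_filter_range_product_dvd_mul_add (pow_dvd_pow p (hjk.trans hkl))
        (pow_dvd_pow p hkl) ((hcop j hu.1).pow_left) (hcop k hu.1) (2 * (u : ℤ) ^ 3 - q)
        fun a => (u : ℤ) ^ 3 + a * (u : ℤ) ^ 2 + q]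
  refine congrArg card (filter_congr fun ⟨u, a, b⟩ _ => ?_)
  by_cases hu : p ∣ u
  · simp [hu]
  · have := triple_root_dvd_iff (u := u) (q := q) (a := a) (b := b)
      (pow_dvd_pow (p : ℤ) hij) (pow_dvd_pow (p : ℤ) hjk)
      (by simpa only [Nat.cast_pow] using hcop j hu)
    push_cast
    simp only [hu, not_false_eq_true, true_and, this, and_assoc]

theorem stmt13_general (p : ℕ) [Fact p.Prime] (hp6 : ¬ p ∣ 6) (q : ℤ) (hq : ¬ (p : ℤ) ∣ q)
    (r β : ℕ) (hβ : 3 * β < r) :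
    Nat.card {x : ℕ × ℕ × ℕ //
        x.1 < p ^ (r - 2 * β) ∧ ¬ p ∣ x.1 ∧ x.2.1 < p ^ (2 * r) ∧ x.2.2 < p ^ (2 * r) ∧
        (p : ℤ) ^ β ∣ ((x.2.1 : ℤ) + 3 * (x.1 : ℤ)) ∧
        (p : ℤ) ^ (r - β) ∣ (3 * (x.1 : ℤ) ^ 2 + 2 * (x.2.1 : ℤ) * (x.1 : ℤ) + (x.2.2 : ℤ)) ∧
        (p : ℤ) ^ (2 * r - 3 * β) ∣
          ((x.1 : ℤ) ^ 3 + (x.2.1 : ℤ) * (x.1 : ℤ) ^ 2 + (x.2.2 : ℤ) * (x.1 : ℤ) + q)} =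
      if β = 0 then (p - 1) * p ^ (2 * r - 1)
      else Nat.card {x : ZMod p // x ^ 3 = -(q : ZMod p)} * p ^ (2 * r + β) := by
  have hp : p.Prime := Fact.out
  rw [card_triple_root_solutions hp q (by omega) (by omega) (by omega)]
  split_ifs with hβ0
  · subst hβ0
    have hunits : #{u ∈ range (p ^ r) | ¬ p ∣ u} = (p - 1) * p ^ (r - 1) := by
      rw [mul_comm, ← Nat.totient_prime_pow hp (by omega), Nat.totient_eq_card_coprime]
      exact congrArg card (filter_congr fun u _ => by
        rw [Nat.coprime_pow_left_iff (by omega), hp.coprime_iff_not_dvd])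
    simp only [mul_zero, Nat.sub_zero, pow_zero, one_dvd, and_true, hunits]
    rw [mul_assoc, ← pow_add, ← pow_add]
    congr 2
    omega
  · rw [card_filter_range_cube_root (fun h => hp6 (h.trans (by norm_num))) hq hβ0 (by omega),
      mul_assoc, ← pow_add, ← pow_add]
    congr 2
    omega

/-- Let `p` be a prime with `p ∤ 6` and `q` an integer with `p ∤ q`. Fix `r ≥ 1`, `β ≥ 0`
with `3β < r`. The number of solutions `(u, a, b)`, with `u` a unit modulo `p^(r-2β)` and
`(a, b)` residues modulo `p^(2r)`, of the system
`a + 3u ≡ 0 (mod p^β)`, `3u² + 2au + b ≡ 0 (mod p^(r-β))`,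
`u³ + au² + bu + q ≡ 0 (mod p^(2r-3β))`
is `(p-1)p^(2r-1)` if `β = 0` and `n_p(q)·p^(2r+β)` if `β ≥ 1`, where
`n_p(q) = #{x ∈ F_p : x³ = -q}`. -/
theorem stmt13 (p : ℕ) [Fact p.Prime] (hp6 : ¬ p ∣ 6) (q : ℤ) (hq : ¬ (p : ℤ) ∣ q)
    (r β : ℕ) (hr : 1 ≤ r) (hβ : 3 * β < r) :
    Nat.card {x : ℕ × ℕ × ℕ //
        x.1 < p ^ (r - 2 * β) ∧ ¬ p ∣ x.1 ∧ x.2.1 < p ^ (2 * r) ∧ x.2.2 < p ^ (2 * r) ∧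
        (p : ℤ) ^ β ∣ ((x.2.1 : ℤ) + 3 * (x.1 : ℤ)) ∧
        (p : ℤ) ^ (r - β) ∣ (3 * (x.1 : ℤ) ^ 2 + 2 * (x.2.1 : ℤ) * (x.1 : ℤ) + (x.2.2 : ℤ)) ∧
        (p : ℤ) ^ (2 * r - 3 * β) ∣
          ((x.1 : ℤ) ^ 3 + (x.2.1 : ℤ) * (x.1 : ℤ) ^ 2 + (x.2.2 : ℤ) * (x.1 : ℤ) + q)} =
      if β = 0 then (p - 1) * p ^ (2 * r - 1)
      else Nat.card {x : ZMod p // x ^ 3 = -(q : ZMod p)} * p ^ (2 * r + β) :=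
  stmt13_general p hp6 q hq r β hβ
end

section
/- Let p be a prime with p ∤ 6q, and let r ≥ 1 with 3 | r, writing r = 3m. The number of solutions (u, a, b) with u ∈ (Z/p^m Z)^× and (a, b) ∈ (Z/p^{6m}Z)² to the system {a + 3u ≡ 0 mod p^m, 3u² + 2au + b ≡ 0 mod p^{2m}, u³ + au² + bu + q ≡ 0 mod p^{3m}} equals n_p(q)·p^{7m}, where n_p(q) = #{x ∈ F_p : x³ = -q}. -/
/-!
Since `u` is prime to `p`, the system is equivalent to the triangular system
`u³ + q ≡ 0 (mod p^m)`, `a u² ≡ q - 2u³ (mod p^(2m))`, `b u ≡ -(u³ + a u² + q) (mod p^(3m))`: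
each congruence of one system is a combination of those of the other, and the factors `u`, `u²`
can be cancelled. So for every root `u` of `X³ + q` modulo `p^m` the residue `a` is fixed modulo
`p^(2m)` and then `b` modulo `p^(3m)`, leaving `p^(4m) · p^(3m)` pairs `(a, b)`. The roots of
`X³ + q` are simple modulo `p` because `p ∤ 3q`, so by Hensel's lemma each of the `n_p(q)` roots
modulo `p` lifts uniquely to a root modulo `p^m`.
-/

open Polynomial

theorem exists_nat_dvd_mul_add {n : ℕ} (hn : n ≠ 0) {w : ℤ} (hw : IsCoprime (n : ℤ) w) (c : ℤ) :
    ∃ x : ℕ, (n : ℤ) ∣ x * w + c := by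
  obtain ⟨u, v, huv⟩ := hw
  have hx : (n : ℤ) ∣ -c * v * w + c := ⟨c * u, by linear_combination -c * huv⟩
  refine ⟨((-c * v) % n).toNat, ?_⟩
  rw [Int.toNat_of_nonneg (Int.emod_nonneg _ (by exact_mod_cast hn)), Int.emod_def]
  simpa [sub_mul, mul_assoc, sub_add_eq_add_sub] using hx.sub (dvd_mul_right (n : ℤ) _)

open scoped Count in
theorem card_lt_mul_dvd_mul_add {n : ℕ} (hn : n ≠ 0) (e : ℕ) {w : ℤ} (hw : IsCoprime (n : ℤ) w)
    (c : ℤ) : Nat.card {x : ℕ // x < n * e ∧ (n : ℤ) ∣ x * w + c} = e := by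
  obtain ⟨x₀, hx₀⟩ := exists_nat_dvd_mul_add hn hw c
  have hmodEq (x : ℕ) : (n : ℤ) ∣ x * w + c ↔ x ≡ x₀ [MOD n] := by
    have hsplit : (x : ℤ) * w + c = (x - x₀) * w + (x₀ * w + c) := by ring
    rw [Nat.ModEq.comm, Nat.modEq_iff_dvd, hsplit, dvd_add_left hx₀]
    exact ⟨hw.dvd_of_dvd_mul_right, fun h => h.mul_right w⟩
  have hn' : 0 < n := Nat.pos_of_ne_zero hn
  have hcount := Nat.count_modEq_card (n * e) hn' x₀
  rw [Nat.mul_div_cancel_left _ hn', Nat.mul_mod_right, Nat.count_eq_card_fintype,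
    ← Nat.card_eq_fintype_card] at hcount
  simpa [hmodEq] using hcount

theorem Nat.card_subtype_prod_of_card_fiber {α β : Type*} {P : α → Prop} {Q : α → β → Prop}
    {n : ℕ} (hn : n ≠ 0) (hQ : ∀ a, P a → Nat.card {b // Q a b} = n) :
    Nat.card {x : α × β // P x.1 ∧ Q x.1 x.2} = Nat.card {a // P a} * n := by
  let e : {x : α × β // P x.1 ∧ Q x.1 x.2} ≃ Σ a : {a // P a}, {b // Q a b} :=
    { toFun x := ⟨⟨x.1.1, x.2.1⟩, ⟨x.1.2, x.2.2⟩⟩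
      invFun y := ⟨(y.1.1, y.2.1), y.1.2, y.2.2⟩
      left_inv _ := rfl
      right_inv _ := rfl }
  have hfin (a : {a // P a}) : Finite {b // Q a b} :=
    Nat.finite_of_card_ne_zero (by rw [hQ a a.2]; exact hn)
  rw [Nat.card_congr (e.trans ((Equiv.sigmaCongrRight fun a : {a // P a} =>
    Finite.equivFinOfCardEq (hQ a.1 a.2)).trans (Equiv.sigmaEquivProd _ _))), Nat.card_prod,
    Nat.card_fin]

theorem IsCoprime.of_dvd_eval {R : Type*} [CommRing R] {p u : R} {f : R[X]}
    (h0 : IsCoprime p (f.eval 0)) (hu : p ∣ f.eval u) : IsCoprime p u := by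
  obtain ⟨k, hk⟩ := sub_dvd_eval_sub u 0 f
  obtain ⟨c, hc⟩ := hu
  obtain ⟨a, b, hab⟩ := h0
  exact ⟨a + b * c, -(b * k), by linear_combination hab + b * hk - b * hc⟩

theorem Polynomial.sq_dvd_eval_add_sub {R : Type*} [CommRing R] (f : R[X]) (x y : R) :
    y ^ 2 ∣ f.eval (x + y) - (f.eval x + f.derivative.eval x * y) := by
  obtain ⟨k, hk⟩ := f.binomExpansion x y
  exact ⟨k, by rw [hk]; ring⟩

def rootsMod (f : ℤ[X]) (n : ℕ) : Set ℕ := {x | x < n ∧ (n : ℤ) ∣ f.eval (x : ℤ)}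

theorem mod_mem_rootsMod {f : ℤ[X]} {d x : ℕ} (hd : d ≠ 0) (hx : (d : ℤ) ∣ f.eval (x : ℤ)) :
    x % d ∈ rootsMod f d := by
  have hmod : (d : ℤ) ∣ x - ((x % d : ℕ) : ℤ) := Nat.modEq_iff_dvd.mp (Nat.mod_modEq x d)
  exact ⟨Nat.mod_lt x (Nat.pos_of_ne_zero hd),
    (dvd_sub_right hx).mp (hmod.trans (sub_dvd_eval_sub _ _ f))⟩

theorem IsCoprime.of_mem_rootsMod {f : ℤ[X]} {p m u : ℕ} (hm : m ≠ 0)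
    (h0 : IsCoprime (p : ℤ) (f.eval 0)) (hu : u ∈ rootsMod f (p ^ m)) : IsCoprime (p : ℤ) u :=
  h0.of_dvd_eval ((dvd_pow_self _ hm).trans (by exact_mod_cast hu.2))

theorem bijOn_mod_rootsMod_pow_succ {f : ℤ[X]} {p k : ℕ} (hp : p ≠ 0) (hk : k ≠ 0)
    (hf' : ∀ x : ℤ, (p : ℤ) ∣ f.eval x → IsCoprime (p : ℤ) (f.derivative.eval x)) :
    Set.BijOn (· % p ^ k) (rootsMod f (p ^ (k + 1))) (rootsMod f (p ^ k)) := by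
  have hp' : (p : ℤ) ≠ 0 := by exact_mod_cast hp
  have htaylor (x t : ℤ) : (p : ℤ) ^ (k + 1) ∣
      f.eval (x + p ^ k * t) - (f.eval x + f.derivative.eval x * (p ^ k * t)) :=
    ((pow_dvd_pow (p : ℤ) (by omega : k + 1 ≤ k * 2)).trans
      ⟨t ^ 2, by ring⟩).trans (f.sq_dvd_eval_add_sub x _)
  have hcop {x : ℤ} {j : ℕ} (hj : j ≠ 0) (hx : (p : ℤ) ^ j ∣ f.eval x) :=
    hf' x ((dvd_pow_self _ hj).trans hx)
  refine ⟨fun x hx => mod_mem_rootsMod (pow_ne_zero _ hp) ?_, ?_, ?_⟩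
  · have hfx := hx.2
    push_cast at hfx ⊢
    exact (pow_dvd_pow _ k.le_succ).trans hfx
  · rintro x ⟨hx, hfx⟩ y ⟨hy, hfy⟩ (hxy : x % p ^ k = y % p ^ k)
    push_cast at hfx hfy
    obtain ⟨t, ht⟩ : (p : ℤ) ^ k ∣ y - x := by exact_mod_cast Nat.modEq_iff_dvd.mp hxy
    have hlin : (p : ℤ) ^ k * p ∣ (p : ℤ) ^ k * (f.derivative.eval (x : ℤ) * t) := by
      have h := (hfy.sub hfx).sub (htaylor x t)
      rw [show (y : ℤ) = x + p ^ k * t by linarith] at h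
      rw [← pow_succ]
      exact h.trans (dvd_of_eq (by ring))
    have ht' : (p : ℤ) ∣ t := (hcop k.succ_ne_zero hfx).dvd_of_dvd_mul_left
      ((mul_dvd_mul_iff_left (pow_ne_zero k hp')).mp hlin)
    have hdiff : ((p ^ (k + 1) : ℕ) : ℤ) ∣ y - x := by
      rw [ht, Nat.cast_pow, pow_succ]
      exact mul_dvd_mul_left _ ht'
    exact (Nat.modEq_iff_dvd.mpr hdiff).eq_of_lt_of_lt hx hy
  · rintro x ⟨hx, s, hs⟩
    push_cast at hs
    obtain ⟨t, ht⟩ := exists_nat_dvd_mul_add hp (hcop hk ⟨s, hs⟩) s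
    refine ⟨(x + p ^ k * t) % p ^ (k + 1), mod_mem_rootsMod (pow_ne_zero _ hp) ?_, ?_⟩
    · have hlin : (p : ℤ) ^ (k + 1) ∣
          f.eval (x : ℤ) + f.derivative.eval (x : ℤ) * (p ^ k * t) := by
        have h := mul_dvd_mul_left ((p : ℤ) ^ k) ht
        rw [← pow_succ] at h
        exact h.trans (dvd_of_eq (by rw [hs]; ring))
      push_cast
      exact (dvd_sub_left hlin).mp (htaylor x t)
    · simp only
      rw [Nat.mod_mod_of_dvd _ (pow_dvd_pow p k.le_succ), Nat.add_mul_mod_self_left,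
        Nat.mod_eq_of_lt hx]

theorem card_rootsMod_pow {f : ℤ[X]} {p : ℕ} (hp : p ≠ 0)
    (hf' : ∀ x : ℤ, (p : ℤ) ∣ f.eval x → IsCoprime (p : ℤ) (f.derivative.eval x))
    {k : ℕ} (hk : k ≠ 0) : Nat.card (rootsMod f (p ^ k)) = Nat.card (rootsMod f p) := by
  induction k with
  | zero => exact absurd rfl hk
  | succ k ih =>
    rcases eq_or_ne k 0 with rfl | hk
    · rw [zero_add, pow_one]
    · rw [← ih hk, Nat.card_congr ((bijOn_mod_rootsMod_pow_succ hp hk hf').equiv _)]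

theorem card_rootsMod_eq_card_zmod (f : ℤ[X]) (n : ℕ) [NeZero n] :
    Nat.card (rootsMod f n) =
      Nat.card {x : ZMod n // (f.map (Int.castRingHom (ZMod n))).eval x = 0} := by
  have hroot (x : ℕ) :
      (n : ℤ) ∣ f.eval (x : ℤ) ↔ (f.map (Int.castRingHom (ZMod n))).eval (x : ZMod n) = 0 := by
    rw [← ZMod.intCast_zmod_eq_zero_iff_dvd, ← Int.cast_natCast (R := ZMod n), eval_intCast_map]
    rfl
  refine Nat.card_eq_of_bijective (fun x => ⟨x.1, (hroot x).1 x.2.2⟩) ⟨?_, ?_⟩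
  · rintro ⟨x, hx, _⟩ ⟨y, hy, _⟩ h
    exact Subtype.ext (by
      simpa [ZMod.natCast_eq_natCast_iff', Nat.mod_eq_of_lt hx, Nat.mod_eq_of_lt hy] using h)
  · rintro ⟨z, hz⟩
    exact ⟨⟨z.val, z.val_lt, (hroot _).2 (by simpa using hz)⟩, by simp⟩

theorem card_rootsMod_X_pow_three_add_C {p : ℕ} [NeZero p] {q : ℤ} (h3 : IsCoprime (p : ℤ) 3)
    (hq : IsCoprime (p : ℤ) q) {m : ℕ} (hm : m ≠ 0) :
    Nat.card (rootsMod (X ^ 3 + C q) (p ^ m)) = Nat.card {x : ZMod p // x ^ 3 = -(q : ZMod p)} := by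
  have hf' (x : ℤ) (hx : (p : ℤ) ∣ (X ^ 3 + C q).eval x) :
      IsCoprime (p : ℤ) ((X ^ 3 + C q).derivative.eval x) := by
    have hx' : IsCoprime (p : ℤ) x := IsCoprime.of_dvd_eval (by simpa using hq) hx
    simpa using h3.mul_right hx'.pow_right
  rw [card_rootsMod_pow (NeZero.ne p) hf' hm, card_rootsMod_eq_card_zmod]
  exact Nat.card_congr (Equiv.subtypeEquivRight fun x => by simp [eq_neg_iff_add_eq_zero])

theorem cubic_system_iff_triangular {R : Type*} [CommRing R] {p u a b q : R} (m : ℕ)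
    (hu : IsCoprime p u) :
    (p ^ m ∣ a + 3 * u ∧ p ^ (2 * m) ∣ 3 * u ^ 2 + 2 * a * u + b ∧
        p ^ (3 * m) ∣ u ^ 3 + a * u ^ 2 + b * u + q) ↔
      (p ^ m ∣ u ^ 3 + q ∧ p ^ (2 * m) ∣ a * u ^ 2 + (2 * u ^ 3 - q) ∧
        p ^ (3 * m) ∣ b * u + (u ^ 3 + a * u ^ 2 + q)) := by
  have hm2 : p ^ m ∣ p ^ (2 * m) := pow_dvd_pow p (by omega)
  have h23 : p ^ (2 * m) ∣ p ^ (3 * m) := pow_dvd_pow p (by omega)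
  have hX : u ^ 2 * (a + 3 * u) = (u ^ 3 + q) + (a * u ^ 2 + (2 * u ^ 3 - q)) := by ring
  have hY : u * (3 * u ^ 2 + 2 * a * u + b) =
      (b * u + (u ^ 3 + a * u ^ 2 + q)) + (a * u ^ 2 + (2 * u ^ 3 - q)) := by ring
  have hZ : u ^ 3 + a * u ^ 2 + b * u + q = b * u + (u ^ 3 + a * u ^ 2 + q) := by ring
  rw [hZ]
  constructor
  · rintro ⟨hX₀, hY₀, hZ₀⟩
    have hW₀ := (dvd_add_right (h23.trans hZ₀)).mp (hY ▸ hY₀.mul_left u)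
    exact ⟨(dvd_add_left (hm2.trans hW₀)).mp (hX ▸ hX₀.mul_left _), hW₀, hZ₀⟩
  · rintro ⟨hV₀, hW₀, hZ₀⟩
    exact ⟨hu.pow.dvd_of_dvd_mul_left (hX ▸ hV₀.add (hm2.trans hW₀)),
      hu.pow_left.dvd_of_dvd_mul_left (hY ▸ (h23.trans hZ₀).add hW₀), hZ₀⟩

/-- The congruences for `a` and `b` in the triangular system, each bound `p^(6m)` written as
the modulus times the number of lifts. -/
def TriangularLifts (p m : ℕ) (q : ℤ) (u : ℕ) (y : ℕ × ℕ) : Prop :=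
  (y.1 < p ^ (2 * m) * p ^ (4 * m) ∧
      ((p ^ (2 * m) : ℕ) : ℤ) ∣ y.1 * (u : ℤ) ^ 2 + (2 * (u : ℤ) ^ 3 - q)) ∧
    (y.2 < p ^ (3 * m) * p ^ (3 * m) ∧
      ((p ^ (3 * m) : ℕ) : ℤ) ∣ y.2 * (u : ℤ) + ((u : ℤ) ^ 3 + y.1 * (u : ℤ) ^ 2 + q))

theorem card_triangularLifts {p : ℕ} (hp : p ≠ 0) (m : ℕ) (q : ℤ) {u : ℕ}
    (hu : IsCoprime (p : ℤ) u) :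
    Nat.card {y // TriangularLifts p m q u y} = p ^ (4 * m) * p ^ (3 * m) := by
  have hpow (j : ℕ) : p ^ j ≠ 0 := pow_ne_zero j hp
  refine (Nat.card_subtype_prod_of_card_fiber
      (P := fun a => a < p ^ (2 * m) * p ^ (4 * m) ∧
        ((p ^ (2 * m) : ℕ) : ℤ) ∣ a * (u : ℤ) ^ 2 + (2 * (u : ℤ) ^ 3 - q))
      (Q := fun a b => b < p ^ (3 * m) * p ^ (3 * m) ∧
        ((p ^ (3 * m) : ℕ) : ℤ) ∣ b * (u : ℤ) + ((u : ℤ) ^ 3 + a * (u : ℤ) ^ 2 + q))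
      (hpow _) fun a _ =>
      card_lt_mul_dvd_mul_add (hpow _) _ (by push_cast; exact hu.pow_left) _).trans ?_
  rw [card_lt_mul_dvd_mul_add (hpow _) _ (by push_cast; exact hu.pow_left.pow_right) _]

theorem cubic_system_iff_rootsMod {p : ℕ} (hp : p.Prime) {q : ℤ} (hq : IsCoprime (p : ℤ) q)
    {m : ℕ} (hm : m ≠ 0) (x : ℕ × ℕ × ℕ) :
    (x.1 < p ^ m ∧ ¬ p ∣ x.1 ∧ x.2.1 < p ^ (6 * m) ∧ x.2.2 < p ^ (6 * m) ∧
        (p : ℤ) ^ m ∣ ((x.2.1 : ℤ) + 3 * (x.1 : ℤ)) ∧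
        (p : ℤ) ^ (2 * m) ∣ (3 * (x.1 : ℤ) ^ 2 + 2 * (x.2.1 : ℤ) * (x.1 : ℤ) + (x.2.2 : ℤ)) ∧
        (p : ℤ) ^ (3 * m) ∣
          ((x.1 : ℤ) ^ 3 + (x.2.1 : ℤ) * (x.1 : ℤ) ^ 2 + (x.2.2 : ℤ) * (x.1 : ℤ) + q)) ↔
      x.1 ∈ rootsMod (X ^ 3 + C q) (p ^ m) ∧ TriangularLifts p m q x.1 x.2 := by
  obtain ⟨u, a, b⟩ := x
  have hunit : ¬ p ∣ u ↔ IsCoprime (p : ℤ) u := by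
    rw [Nat.isCoprime_iff_coprime, hp.coprime_iff_not_dvd]
  have hroot : u ∈ rootsMod (X ^ 3 + C q) (p ^ m) → IsCoprime (p : ℤ) u :=
    IsCoprime.of_mem_rootsMod hm (by simpa using hq)
  simp only [TriangularLifts, rootsMod, Set.mem_ofPred_eq, eval_add, eval_pow, eval_X, eval_C,
    Nat.cast_pow] at hroot ⊢
  rw [← pow_add, ← pow_add, show 2 * m + 4 * m = 6 * m by ring, show 3 * m + 3 * m = 6 * m by ring]
  constructor
  · rintro ⟨hu, hpu, ha, hb, hsys⟩
    obtain ⟨h1, h2, h3⟩ := (cubic_system_iff_triangular m (hunit.mp hpu)).mp hsys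
    exact ⟨⟨hu, h1⟩, ⟨ha, h2⟩, ⟨hb, h3⟩⟩
  · rintro ⟨⟨hu, h1⟩, ⟨ha, h2⟩, ⟨hb, h3⟩⟩
    have hpu := hroot ⟨hu, h1⟩
    exact ⟨hu, hunit.mpr hpu, ha, hb, (cubic_system_iff_triangular m hpu).mpr ⟨h1, h2, h3⟩⟩

/-- Let `p` be a prime with `p ∤ 6q` and `r = 3m ≥ 1` divisible by `3`. The number of
solutions `(u, a, b)`, with `u` a unit modulo `p^m` and `(a, b)` residues modulo `p^(6m)`,
of the system `a + 3u ≡ 0 (mod p^m)`, `3u² + 2au + b ≡ 0 (mod p^(2m))`,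
`u³ + au² + bu + q ≡ 0 (mod p^(3m))` equals `n_p(q)·p^(7m)`, where
`n_p(q) = #{x ∈ F_p : x³ = -q}`. -/
theorem stmt14 (p : ℕ) [Fact p.Prime] (q : ℤ) (hpq : IsCoprime (p : ℤ) (6 * q))
    (m : ℕ) (hm : 1 ≤ m) :
    Nat.card {x : ℕ × ℕ × ℕ //
        x.1 < p ^ m ∧ ¬ p ∣ x.1 ∧ x.2.1 < p ^ (6 * m) ∧ x.2.2 < p ^ (6 * m) ∧
        (p : ℤ) ^ m ∣ ((x.2.1 : ℤ) + 3 * (x.1 : ℤ)) ∧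
        (p : ℤ) ^ (2 * m) ∣ (3 * (x.1 : ℤ) ^ 2 + 2 * (x.2.1 : ℤ) * (x.1 : ℤ) + (x.2.2 : ℤ)) ∧
        (p : ℤ) ^ (3 * m) ∣
          ((x.1 : ℤ) ^ 3 + (x.2.1 : ℤ) * (x.1 : ℤ) ^ 2 + (x.2.2 : ℤ) * (x.1 : ℤ) + q)} =
      Nat.card {x : ZMod p // x ^ 3 = -(q : ZMod p)} * p ^ (7 * m) := by
  have hp : p.Prime := Fact.out
  have h3 : IsCoprime (p : ℤ) 3 :=
    IsCoprime.of_mul_right_left (show (6 : ℤ) * q = 3 * (2 * q) by ring ▸ hpq)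
  have hq : IsCoprime (p : ℤ) q := hpq.of_mul_right_right
  have hm' : m ≠ 0 := by omega
  have hq0 : IsCoprime (p : ℤ) ((X ^ 3 + C q).eval 0) := by simpa using hq
  rw [Nat.card_congr (Equiv.subtypeEquivRight (cubic_system_iff_rootsMod hp hq hm')),
    Nat.card_subtype_prod_of_card_fiber (mul_ne_zero (pow_ne_zero _ hp.ne_zero)
      (pow_ne_zero _ hp.ne_zero)) fun u (hu : u ∈ rootsMod _ _) =>
        card_triangularLifts hp.ne_zero m q (IsCoprime.of_mem_rootsMod hm' hq0 hu),
    card_rootsMod_X_pow_three_add_C h3 hq hm', ← pow_add]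
  ring_nf
end

section
/- Assume q is odd. Fix integers r ≥ 3β ≥ 0 with r > 0. The number of solutions (u, a, b) with u ∈ (Z/2^{r-2β}Z)^× and (a, b) ∈ (Z/2^{2r}Z)² to the system {3u + a ≡ 0 mod 2^β, 3u² + 2au + b ≡ 0 mod 2^{r-β}, u³ + au² + bu + q ≡ 0 mod 2^{2r-3β}} equals 2^{2r-1} if β = 0 and 2^{2r+β} if β ≥ 1; in particular the count is independent of q. -/
/-!
For odd `u`, multiplying the second congruence by `u` and subtracting the third gives
`u²a + 2u³ - q ≡ 0 (mod 2^(r-β))`; multiplying the first by `u²` and subtracting that gives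
`u³ + q ≡ 0 (mod 2^β)`. The system is therefore triangular. For admissible `(u, a)` the third
congruence is linear in `b` with unit coefficient `u`, leaving `2^(3β)` values of `b`; for
admissible `u` the reduced second congruence is linear in `a` with unit coefficient `u²`, leaving
`2^(r+β)` values of `a`. Finally `u³ ≡ -q (mod 2^β)` has a unique solution when `β ≥ 1`, since
cubing is a bijection of `(ℤ/2^β)ˣ`, a group of order `2^(β-1)`; this leaves `2^(r-3β)` values
of `u`, against all `2^(r-1)` odd `u` when `β = 0`.
-/

open Finset

lemma card_filter_range_mul_modEq {m : ℕ} (hm : 0 < m) (k v : ℕ) :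
    #{n ∈ range (m * k) | n ≡ v [MOD m]} = k := by
  rw [← Nat.count_eq_card_filter_range, Nat.count_modEq_card _ hm, Nat.mul_div_cancel_left k hm,
    Nat.mul_mod_right]
  simp

lemma card_filter_range_mul_natCast_eq {m : ℕ} [NeZero m] (k : ℕ) (c : ZMod m) :
    #{n ∈ range (m * k) | ((n : ℕ) : ZMod m) = c} = k := by
  refine (congrArg card (filter_congr fun n _ => ?_)).trans
    (card_filter_range_mul_modEq (Nat.pos_of_neZero m) k c.val)
  rw [← ZMod.natCast_eq_natCast_iff, ZMod.natCast_zmod_val]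

lemma card_filter_range_mul_dvd_mul_add {m s : ℕ} [NeZero m] (k : ℕ) (hs : s.Coprime m)
    (t : ℤ) : #{n ∈ range (m * k) | (m : ℤ) ∣ s * (n : ℕ) + t} = k := by
  refine (congrArg card (filter_congr fun n _ => ?_)).trans
    (card_filter_range_mul_natCast_eq k ((ZMod.unitOfCoprime s hs)⁻¹ * -(t : ZMod m) : ZMod m))
  rw [← ZMod.intCast_zmod_eq_zero_iff_dvd, Units.eq_inv_mul_iff_mul_eq, ZMod.coe_unitOfCoprime]
  push_cast
  exact ⟨fun h => by linear_combination h, fun h => by linear_combination h⟩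

lemma existsUnique_pow_eq_of_coprime_card_units {M : Type*} [CommMonoid M] {n : ℕ} (hn : n ≠ 0)
    (h : (Nat.card Mˣ).Coprime n) (c : Mˣ) : ∃! x : M, x ^ n = c := by
  obtain ⟨g, hg⟩ := h.pow_left_bijective.2 c
  refine ⟨g, by simp [← hg], fun y hy => ?_⟩
  obtain ⟨w, rfl⟩ := (isUnit_pow_iff hn).mp (hy ▸ c.isUnit)
  have hw : w ^ n = g ^ n := Units.ext (by simpa [hg] using hy)
  exact congrArg Units.val (h.pow_left_bijective.1 hw)

lemma coprime_card_units_zmod_two_pow_three (e : ℕ) : (Nat.card (ZMod (2 ^ e))ˣ).Coprime 3 := by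
  rw [Nat.card_eq_fintype_card, ZMod.card_units_eq_totient]
  cases e with
  | zero => decide
  | succ e =>
    rw [Nat.totient_prime_pow_succ Nat.prime_two]
    exact Nat.Coprime.mul_left (Nat.Coprime.pow_left _ (by decide)) (by decide)

lemma dvd_iff_dvd_mul_sub_of_dvd {R : Type*} [CommRing R] {d u f g : R} (hu : IsCoprime d u)
    (hf : d ∣ f) : d ∣ g ↔ d ∣ u * g - f := by
  rw [dvd_sub_left hf]
  exact ⟨fun h => h.mul_left u, hu.dvd_of_dvd_mul_left⟩

lemma natCard_subtype_eq_sum_card_filter (U A B : ℕ) (o : ℕ → Prop) (p : ℕ × ℕ × ℕ → Prop)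
    [DecidablePred o] [DecidablePred p] :
    Nat.card {x : ℕ × ℕ × ℕ // x.1 < U ∧ o x.1 ∧ x.2.1 < A ∧ x.2.2 < B ∧ p x} =
      ∑ u ∈ range U with o u, ∑ a ∈ range A, #{b ∈ range B | p (u, a, b)} := by
  have hfin : Nat.card {x : ℕ × ℕ × ℕ // x.1 < U ∧ o x.1 ∧ x.2.1 < A ∧ x.2.2 < B ∧ p x} =
      #{x ∈ {u ∈ range U | o u} ×ˢ range A ×ˢ range B | p x} := by
    rw [← Nat.card_eq_finsetCard]
    exact Nat.card_congr (Equiv.subtypeEquivRight fun x => by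
      simp only [mem_filter, mem_product, mem_range]
      tauto)
  rw [hfin]
  simp only [card_filter, sum_product]

lemma isCoprime_two_pow_natCast {u : ℕ} (hu : ¬ 2 ∣ u) (e : ℕ) : IsCoprime ((2 : ℤ) ^ e) u :=
  (Int.isCoprime_two_left.mpr (by exact_mod_cast Nat.odd_iff.mpr (by omega))).pow_left

lemma coprime_two_pow {u : ℕ} (hu : ¬ 2 ∣ u) (e : ℕ) : u.Coprime (2 ^ e) :=
  (Nat.odd_iff.mpr (by omega)).coprime_two_right.pow_right e

section

variable {q : ℤ} {r β u : ℕ}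

lemma card_solutions_b (hβ : 3 * β ≤ r) (hu : ¬ 2 ∣ u) (a : ℕ) :
    #{b ∈ range (2 ^ (2 * r)) | (2 : ℤ) ^ β ∣ 3 * (u : ℤ) + a ∧
        (2 : ℤ) ^ (r - β) ∣ 3 * (u : ℤ) ^ 2 + 2 * (a : ℤ) * u + (b : ℕ) ∧
        (2 : ℤ) ^ (2 * r - 3 * β) ∣ (u : ℤ) ^ 3 + (a : ℤ) * (u : ℤ) ^ 2 + ((b : ℕ) : ℤ) * u + q} =
      if (2 : ℤ) ^ β ∣ 3 * (u : ℤ) + a ∧ (2 : ℤ) ^ (r - β) ∣ (u : ℤ) ^ 2 * a + (2 * (u : ℤ) ^ 3 - q)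
        then 2 ^ (3 * β) else 0 := by
  have second_dvd_iff {b : ℕ}
      (h3 : (2 : ℤ) ^ (2 * r - 3 * β) ∣ (u : ℤ) ^ 3 + (a : ℤ) * (u : ℤ) ^ 2 + (b : ℤ) * u + q) :
      (2 : ℤ) ^ (r - β) ∣ 3 * (u : ℤ) ^ 2 + 2 * (a : ℤ) * u + b ↔
        (2 : ℤ) ^ (r - β) ∣ (u : ℤ) ^ 2 * a + (2 * (u : ℤ) ^ 3 - q) := by
    rw [dvd_iff_dvd_mul_sub_of_dvd (isCoprime_two_pow_natCast hu _)
      ((pow_dvd_pow 2 (by omega)).trans h3)]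
    ring_nf
  split_ifs with h
  · obtain ⟨h1, h2⟩ := h
    have hsplit : 2 ^ (2 * r) = 2 ^ (2 * r - 3 * β) * 2 ^ (3 * β) := by
      rw [← pow_add]; congr 1; omega
    rw [hsplit]
    refine (congrArg card (filter_congr fun b _ => ?_)).trans
      (card_filter_range_mul_dvd_mul_add _ (coprime_two_pow hu _)
        ((u : ℤ) ^ 3 + (a : ℤ) * (u : ℤ) ^ 2 + q))
    push_cast
    rw [show (u : ℤ) * b + ((u : ℤ) ^ 3 + (a : ℤ) * (u : ℤ) ^ 2 + q) =
        (u : ℤ) ^ 3 + (a : ℤ) * (u : ℤ) ^ 2 + (b : ℤ) * u + q by ring]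
    exact ⟨fun h => h.2.2, fun h3 => ⟨h1, (second_dvd_iff h3).mpr h2, h3⟩⟩
  · rw [card_eq_zero, filter_eq_empty_iff]
    rintro b - ⟨h1, h2, h3⟩
    exact h ⟨h1, (second_dvd_iff h3).mp h2⟩

lemma card_solutions_a (hβ : 3 * β ≤ r) (hu : ¬ 2 ∣ u) :
    #{a ∈ range (2 ^ (2 * r)) | (2 : ℤ) ^ β ∣ 3 * (u : ℤ) + (a : ℕ) ∧
        (2 : ℤ) ^ (r - β) ∣ (u : ℤ) ^ 2 * (a : ℕ) + (2 * (u : ℤ) ^ 3 - q)} =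
      if (2 : ℤ) ^ β ∣ (u : ℤ) ^ 3 + q then 2 ^ (r + β) else 0 := by
  have first_dvd_iff {a : ℕ} (h2 : (2 : ℤ) ^ (r - β) ∣ (u : ℤ) ^ 2 * a + (2 * (u : ℤ) ^ 3 - q)) :
      (2 : ℤ) ^ β ∣ 3 * (u : ℤ) + a ↔ (2 : ℤ) ^ β ∣ (u : ℤ) ^ 3 + q := by
    rw [dvd_iff_dvd_mul_sub_of_dvd ((isCoprime_two_pow_natCast hu _).pow_right (n := 2))
      ((pow_dvd_pow 2 (by omega)).trans h2)]
    ring_nf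
  split_ifs with h
  · have hsplit : 2 ^ (2 * r) = 2 ^ (r - β) * 2 ^ (r + β) := by
      rw [← pow_add]; congr 1; omega
    rw [hsplit]
    refine (congrArg card (filter_congr fun a _ => ?_)).trans
      (card_filter_range_mul_dvd_mul_add _ ((coprime_two_pow hu _).pow_left 2)
        (2 * (u : ℤ) ^ 3 - q))
    push_cast
    exact ⟨fun h => h.2, fun h2 => ⟨(first_dvd_iff h2).mpr h, h2⟩⟩
  · rw [card_eq_zero, filter_eq_empty_iff]
    rintro a - ⟨h1, h2⟩
    exact h ((first_dvd_iff h2).mp h1)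

lemma sum_card_solutions_b (hβ : 3 * β ≤ r) (hu : ¬ 2 ∣ u) :
    ∑ a ∈ range (2 ^ (2 * r)), #{b ∈ range (2 ^ (2 * r)) | (2 : ℤ) ^ β ∣ 3 * (u : ℤ) + a ∧
        (2 : ℤ) ^ (r - β) ∣ 3 * (u : ℤ) ^ 2 + 2 * (a : ℤ) * u + (b : ℕ) ∧
        (2 : ℤ) ^ (2 * r - 3 * β) ∣ (u : ℤ) ^ 3 + (a : ℤ) * (u : ℤ) ^ 2 + ((b : ℕ) : ℤ) * u + q} =
      if (2 : ℤ) ^ β ∣ (u : ℤ) ^ 3 + q then 2 ^ (r + β) * 2 ^ (3 * β) else 0 := by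
  simp_rw [card_solutions_b hβ hu]
  rw [← sum_filter, sum_const, smul_eq_mul, card_solutions_a hβ hu]
  split_ifs <;> simp

end

lemma card_filter_range_two_pow_mul_dvd_pow_three_add {q : ℤ} (hq : Odd q) {e : ℕ} (he : e ≠ 0)
    (k : ℕ) : #{u ∈ range (2 ^ e * k) | ¬ 2 ∣ u ∧ (2 : ℤ) ^ e ∣ ((u : ℕ) : ℤ) ^ 3 + q} = k := by
  have hq_unit : IsUnit (q : ZMod (2 ^ e)) := by
    rw [ZMod.coe_int_isUnit_iff_isCoprime]
    exact_mod_cast (Int.isCoprime_two_left.mpr hq).pow_left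
  obtain ⟨x, hx, huniq⟩ := existsUnique_pow_eq_of_coprime_card_units three_ne_zero
    (coprime_card_units_zmod_two_pow_three e) hq_unit.neg.unit
  rw [IsUnit.unit_spec] at hx huniq
  refine (congrArg card (filter_congr fun u _ => ?_)).trans (card_filter_range_mul_natCast_eq k x)
  have hcube : (2 : ℤ) ^ e ∣ (u : ℤ) ^ 3 + q ↔ (u : ZMod (2 ^ e)) ^ 3 = -q := by
    have h := ZMod.intCast_zmod_eq_zero_iff_dvd ((u : ℤ) ^ 3 + q) (2 ^ e)
    push_cast at h
    rw [← h, eq_neg_iff_add_eq_zero]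
  refine ⟨fun ⟨_, h⟩ => huniq _ (hcube.mp h), fun hux => ?_⟩
  have hdvd := hcube.mpr (hux ▸ hx)
  refine ⟨fun h2u => ?_, hdvd⟩
  have hu3 : (2 : ℤ) ∣ (u : ℤ) ^ 3 := dvd_pow (by exact_mod_cast h2u) three_ne_zero
  exact Int.not_even_iff_odd.mpr hq
    (even_iff_two_dvd.mpr ((dvd_add_right hu3).mp ((dvd_pow_self 2 he).trans hdvd)))

lemma card_solutions_u {q : ℤ} (hq : Odd q) {r β : ℕ} (hr : 0 < r) (hβ : 3 * β ≤ r) :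
    #{u ∈ range (2 ^ (r - 2 * β)) | ¬ 2 ∣ u ∧ (2 : ℤ) ^ β ∣ ((u : ℕ) : ℤ) ^ 3 + q} =
      if β = 0 then 2 ^ (r - 1) else 2 ^ (r - 3 * β) := by
  split_ifs with hβ0
  · subst hβ0
    have hsplit : 2 ^ (r - 2 * 0) = 2 * 2 ^ (r - 1) := by
      rw [← pow_succ']; congr 1; omega
    rw [hsplit]
    refine (congrArg card (filter_congr fun u _ => ?_)).trans
      (card_filter_range_mul_modEq two_pos _ 1)
    simp only [pow_zero, one_dvd, and_true, Nat.ModEq]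
    omega
  · have hsplit : 2 ^ (r - 2 * β) = 2 ^ β * 2 ^ (r - 3 * β) := by
      rw [← pow_add]; congr 1; omega
    rw [hsplit]
    exact card_filter_range_two_pow_mul_dvd_pow_three_add hq hβ0 _

/-- Let `q` be odd and fix `r ≥ 3β ≥ 0` with `r > 0`. The number of solutions `(u, a, b)`,
with `u` a unit modulo `2^(r-2β)` and `(a, b)` residues modulo `2^(2r)`, of the system
`3u + a ≡ 0 (mod 2^β)`, `3u² + 2au + b ≡ 0 (mod 2^(r-β))`,
`u³ + au² + bu + q ≡ 0 (mod 2^(2r-3β))` equals `2^(2r-1)` if `β = 0` and `2^(2r+β)` if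
`β ≥ 1`; in particular, it is independent of `q`. -/
theorem stmt16 (q : ℤ) (hq : Odd q) (r β : ℕ) (hr : 0 < r) (hβ : 3 * β ≤ r) :
    Nat.card {x : ℕ × ℕ × ℕ //
        x.1 < 2 ^ (r - 2 * β) ∧ ¬ 2 ∣ x.1 ∧ x.2.1 < 2 ^ (2 * r) ∧ x.2.2 < 2 ^ (2 * r) ∧
        (2 : ℤ) ^ β ∣ (3 * (x.1 : ℤ) + (x.2.1 : ℤ)) ∧
        (2 : ℤ) ^ (r - β) ∣ (3 * (x.1 : ℤ) ^ 2 + 2 * (x.2.1 : ℤ) * (x.1 : ℤ) + (x.2.2 : ℤ)) ∧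
        (2 : ℤ) ^ (2 * r - 3 * β) ∣
          ((x.1 : ℤ) ^ 3 + (x.2.1 : ℤ) * (x.1 : ℤ) ^ 2 + (x.2.2 : ℤ) * (x.1 : ℤ) + q)} =
      if β = 0 then 2 ^ (2 * r - 1) else 2 ^ (2 * r + β) := by
  rw [natCard_subtype_eq_sum_card_filter _ _ _ (fun u => ¬ 2 ∣ u),
    sum_congr rfl fun u hu => sum_card_solutions_b hβ (mem_filter.mp hu).2,
    ← sum_filter, sum_const, smul_eq_mul, filter_filter, card_solutions_u hq hr hβ]
  split_ifs <;> rw [← pow_add, ← pow_add] <;> congr 1 <;> omega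
end
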